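/- arXiv:2509.26248 — 4 statements merged into one kernel-verified Lean document; each statement's English description precedes it below -/
import Mathlib

section
/- There exists a universal constant C > 0 such that for all p ∈ (0,1), all n ≥ 1, and all z ∈ {0,1}^{2n} with an even number of ones, the pull-back measure satisfies ρ_p(z) ≥ C · μ_p(z). Concretely, if z has 2k ones, ρ_p(z) = p^k(1−p)^{n−k} · C(n,k)/C(2n,2k) and μ_p(z) = p^{2k}(1−p)^{2n−2k}, so the claim is C(n,k)/C(2n,2k) ≥ C · p^k(1−p)^{n−k} for all p ∈ (0,1). -/
open Finset

lemma chooseStep (n i j : ℕ) (h : i ≤ j) :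
    n.choose i * n.choose (j+1) ≤ n.choose (i+1) * n.choose j := by
  have h1 := Nat.choose_succ_right_eq n i
  have h2 := Nat.choose_succ_right_eq n j
  apply Nat.le_of_mul_le_mul_right _ (show 0 < (i+1)*(j+1) by positivity)
  calc n.choose i * n.choose (j+1) * ((i+1)*(j+1))
      = n.choose i * (n.choose (j+1) * (j+1)) * (i+1) := by ring
    _ = n.choose i * n.choose j * ((i+1) * (n-j)) := by rw [h2]; ring
    _ ≤ n.choose i * n.choose j * ((j+1) * (n-i)) := by
        exact Nat.mul_le_mul_left _ (Nat.mul_le_mul (by omega) (by omega))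
    _ = n.choose i * (n-i) * n.choose j * (j+1) := by ring
    _ = n.choose (i+1) * n.choose j * ((i+1)*(j+1)) := by rw [← h1]; ring

lemma chooseLogConcave (n k : ℕ) : ∀ d i j, j - i ≤ d → i + j = 2*k → i ≤ j →
    n.choose i * n.choose j ≤ n.choose k ^ 2 := by
  intro d
  induction d with
  | zero =>
    intro i j h1 h2 h3
    have hi : i = k := by omega
    have hj : j = k := by omega
    subst hi; subst hj; rw [sq]
  | succ d ih =>
    intro i j h1 h2 h3
    rcases eq_or_lt_of_le h3 with he | hl
    · have hi : i = k := by omega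
      have hj : j = k := by omega
      subst hi; subst hj; rw [sq]
    · have hj2 : i + 2 ≤ j := by omega
      have hs := chooseStep n i (j-1) (by omega)
      have hj1 : j - 1 + 1 = j := by omega
      rw [hj1] at hs
      exact le_trans hs (ih (i+1) (j-1) (by omega) (by omega) (by omega))

lemma chooseLogConcave' (n k i j : ℕ) (h : i + j = 2*k) :
    n.choose i * n.choose j ≤ n.choose k ^ 2 := by
  rcases le_total i j with hle | hle
  · exact chooseLogConcave n k (j - i) i j le_rfl h hle
  · rw [mul_comm]; exact chooseLogConcave n k (i - j) j i le_rfl (by omega) hle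

/-- There is a universal constant `C > 0` such that for all `p ∈ (0,1)`, `n ≥ 1` and
`0 ≤ k ≤ n` (so that a point `z ∈ {0,1}^{2n}` with `2k` ones has pull-back measure
`ρ_p(z) = p^k(1−p)^{n−k}·C(n,k)/C(2n,2k)` and biased measure `μ_p(z) = p^{2k}(1−p)^{2(n−k)}`),
we have `C(n,k)/C(2n,2k) ≥ C · p^k(1−p)^{n−k}`, i.e. `ρ_p(z) ≥ C · μ_p(z)`. -/
theorem pullback_ge_biased :
    ∃ C : ℝ, 0 < C ∧ ∀ (p : ℝ), p ∈ Set.Ioo (0:ℝ) 1 → ∀ (n k : ℕ), 1 ≤ n → k ≤ n →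
      ((n.choose k : ℝ) / ((2*n).choose (2*k) : ℝ)) ≥ C * (p^k * (1 - p)^(n - k)) := by
  refine ⟨1, one_pos, ?_⟩
  rintro p ⟨hp0, hp1⟩ n k hn hk
  have hcpos : (0:ℝ) < ((2*n).choose (2*k) : ℝ) := by
    exact_mod_cast Nat.choose_pos (by omega : 2*k ≤ 2*n)
  rw [one_mul, ge_iff_le, le_div_iff₀ hcpos]
  have hq0 : (0:ℝ) < 1 - p := by linarith
  set q : ℝ := 1 - p with hq
  set G : ℝ := p ^ k * q ^ (n - k) with hG
  set B : ℕ → ℝ := fun i => (n.choose i : ℝ) * (p ^ i * q ^ (n - i)) with hB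
  have hBnn : ∀ i, 0 ≤ B i := fun i => by positivity
  -- sum of B over any range is ≤ 1
  have hBsum : ∀ N : ℕ, ∑ i ∈ range N, B i ≤ 1 := by
    intro N
    have h1 : ∑ i ∈ range (n+1), B i = 1 := by
      have := add_pow p q n
      rw [show p + q = 1 by ring, one_pow] at this
      rw [this]
      apply Finset.sum_congr rfl
      intro i _
      simp only [hB]; ring
    calc ∑ i ∈ range N, B i ≤ ∑ i ∈ range (max N (n+1)), B i :=
          Finset.sum_le_sum_of_subset_of_nonneg
            (Finset.range_subset_range.2 (le_max_left _ _)) (fun i _ _ => hBnn i)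
      _ = ∑ i ∈ range (n+1), B i := by
          refine (Finset.sum_subset (Finset.range_subset_range.2 (le_max_right _ _)) ?_).symm
          intro i _ hi
          simp only [Finset.mem_range, not_lt] at hi
          simp [hB, Nat.choose_eq_zero_of_lt (by omega : n < i)]
      _ ≤ 1 := le_of_eq h1
  -- per-term bound
  have hterm : ∀ i j : ℕ, i + j = 2*k →
      (n.choose i : ℝ) * (n.choose j) * G ≤ (n.choose k : ℝ) * ((B i + B j)/2) := by
    intro i j hij
    rcases le_or_gt i n with hin | hin
    · rcases le_or_gt j n with hjn | hjn
      · -- main case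
        have hAij : (p ^ i * q ^ (n - i)) * (p ^ j * q ^ (n - j)) = G ^ 2 := by
          rw [hG]
          have e1 : i + j = 2*k := hij
          have e2 : (n - i) + (n - j) = 2*(n-k) := by omega
          rw [show (p ^ i * q ^ (n - i)) * (p ^ j * q ^ (n - j))
              = p ^ (i+j) * q ^ ((n-i)+(n-j)) by rw [pow_add, pow_add]; ring,
            e1, e2]
          ring
        have hcc : (n.choose i : ℝ) * (n.choose j) ≤ (n.choose k : ℝ)^2 := by
          exact_mod_cast chooseLogConcave' n k i j hij
        have hGnn : (0:ℝ) ≤ G := by positivity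
        have hBi := hBnn i
        have hBj := hBnn j
        have hsq : ((n.choose i : ℝ) * (n.choose j) * G)^2
            ≤ ((n.choose k : ℝ) * ((B i + B j)/2))^2 := by
          have h1 : ((n.choose i : ℝ) * (n.choose j) * G)^2
              = ((n.choose i : ℝ) * (n.choose j)) * (B i * B j) := by
            simp only [hB]
            linear_combination (-((n.choose i : ℝ) * (n.choose j))^2) * hAij
          rw [h1]
          have h2 : B i * B j ≤ ((B i + B j)/2)^2 := by nlinarith [sq_nonneg (B i - B j)]
          have h3 : ((n.choose i : ℝ) * (n.choose j)) * (B i * B j)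
              ≤ (n.choose k : ℝ)^2 * ((B i + B j)/2)^2 := by
            apply mul_le_mul hcc h2 (by positivity) (by positivity)
          calc ((n.choose i : ℝ) * (n.choose j)) * (B i * B j)
              ≤ (n.choose k : ℝ)^2 * ((B i + B j)/2)^2 := h3
            _ = ((n.choose k : ℝ) * ((B i + B j)/2))^2 := by ring
        have hL : (0:ℝ) ≤ (n.choose i : ℝ) * (n.choose j) * G := by positivity
        have hR : (0:ℝ) ≤ (n.choose k : ℝ) * ((B i + B j)/2) := by positivity
        nlinarith [hsq, hL, hR]
      · have : (n.choose j : ℝ) = 0 := by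
          exact_mod_cast Nat.choose_eq_zero_of_lt hjn
        rw [this]
        have : (0:ℝ) ≤ (n.choose k : ℝ) * ((B i + B j)/2) := by positivity
        nlinarith [this]
    · have : (n.choose i : ℝ) = 0 := by
        exact_mod_cast Nat.choose_eq_zero_of_lt hin
      rw [this]
      have : (0:ℝ) ≤ (n.choose k : ℝ) * ((B i + B j)/2) := by positivity
      nlinarith [this]
  -- Vandermonde
  have hvdm : ((2*n).choose (2*k) : ℝ) * G
      = ∑ i ∈ range (2*k+1), (n.choose i : ℝ) * (n.choose (2*k - i)) * G := by
    have := Nat.add_choose_eq n n (2*k)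
    rw [show n + n = 2*n by ring] at this
    rw [this]
    rw [Finset.Nat.sum_antidiagonal_eq_sum_range_succ_mk]
    push_cast
    rw [Finset.sum_mul]
  rw [mul_comm]
  calc ((2*n).choose (2*k) : ℝ) * G
      = ∑ i ∈ range (2*k+1), (n.choose i : ℝ) * (n.choose (2*k - i)) * G := hvdm
    _ ≤ ∑ i ∈ range (2*k+1), (n.choose k : ℝ) * ((B i + B (2*k - i))/2) := by
        apply Finset.sum_le_sum
        intro i hi
        simp only [Finset.mem_range] at hi
        exact hterm i (2*k - i) (by omega)
    _ = (n.choose k : ℝ) * ((∑ i ∈ range (2*k+1), B i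
          + ∑ i ∈ range (2*k+1), B (2*k - i))/2) := by
        rw [← Finset.sum_add_distrib, Finset.sum_div, Finset.mul_sum]
    _ = (n.choose k : ℝ) * (∑ i ∈ range (2*k+1), B i) := by
        have hre : ∑ i ∈ range (2*k+1), B (2*k - i) = ∑ i ∈ range (2*k+1), B i := by
          have h := Finset.sum_range_reflect (fun i => B i) (2*k+1)
          simpa using h
        rw [hre]; ring
    _ ≤ (n.choose k : ℝ) * 1 := by
        apply mul_le_mul_of_nonneg_left (hBsum _) (by positivity)
    _ = (n.choose k : ℝ) := mul_one _
end

section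
/- Let f : {0,1}^m → {0,1} and let π : [m] → [m−1] be the minor map identifying coordinates m−1 and m (π(m−1) = π(m) = m−1, π(i) = i otherwise), so f^π(x) := f(x_1,…,x_{m−2}, x_{m−1}, x_{m−1}). Then for every p ∈ (0,1): Inf^{(p)}_{m−1}(f^π) ≥ min(p,1−p) · Inf^{(p)}_{m−1}(f) − (1/min(p,1−p)) · Inf^{(p)}_m(f). -/
open Finset

noncomputable def w (p : ℝ) (b : Bool) : ℝ := if b then p else 1 - p

noncomputable def mu (p : ℝ) {n : ℕ} (x : Fin n → Bool) : ℝ := ∏ i, w p (x i)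

/-- We model `{0,1}^m` with distinguished last two coordinates `m−1, m` as
`(Fin (m-2) → Bool) × Bool × Bool`; below `f (x, a, b)` means `f` evaluated at the point
whose first `m−2` bits are `x`, bit `m−1` is `a` and bit `m` is `b`.

Influence of coordinate `m−1`: `Inf^{(p)}_{m−1}(f) = p(1−p)·Pr[f(x,a,b) ≠ f(x,¬a,b)]`. -/
noncomputable def infA (p : ℝ) {m : ℕ} (f : (Fin m → Bool) → Bool → Bool → Bool) : ℝ :=
  p * (1 - p) * ∑ x : Fin m → Bool, ∑ a : Bool, ∑ b : Bool,
    if f x a b ≠ f x (!a) b then mu p x * w p a * w p b else 0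

/-- Influence of coordinate `m`: `Inf^{(p)}_m(f) = p(1−p)·Pr[f(x,a,b) ≠ f(x,a,¬b)]`. -/
noncomputable def infB (p : ℝ) {m : ℕ} (f : (Fin m → Bool) → Bool → Bool → Bool) : ℝ :=
  p * (1 - p) * ∑ x : Fin m → Bool, ∑ a : Bool, ∑ b : Bool,
    if f x a b ≠ f x a (!b) then mu p x * w p a * w p b else 0

/-- Influence of the merged coordinate `m−1` in the minor `f^π(x,a) = f(x,a,a)` obtained by
identifying coordinates `m−1` and `m`. -/
noncomputable def infMinor (p : ℝ) {m : ℕ} (f : (Fin m → Bool) → Bool → Bool → Bool) : ℝ :=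
  p * (1 - p) * ∑ x : Fin m → Bool, ∑ a : Bool,
    if f x a a ≠ f x (!a) (!a) then mu p x * w p a else 0

set_option maxHeartbeats 2000000

/-- Identifying the last two coordinates of a Boolean function preserves influence:
`Inf^{(p)}_{m−1}(f^π) ≥ min(p,1−p)·Inf^{(p)}_{m−1}(f) − (1/min(p,1−p))·Inf^{(p)}_m(f)`. -/
theorem influence_after_gluing {m : ℕ} {p : ℝ} (hp : p ∈ Set.Ioo (0:ℝ) 1)
    (f : (Fin m → Bool) → Bool → Bool → Bool) :
    infMinor p f ≥ min p (1 - p) * infA p f - (1 / min p (1 - p)) * infB p f := by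
  obtain ⟨hp0, hp1⟩ := hp
  have h1p : (0:ℝ) ≤ 1 - p := by linarith
  have hq : 0 < min p (1 - p) := lt_min hp0 (by linarith)
  have hqp : min p (1 - p) ≤ p := min_le_left _ _
  have hq1p : min p (1 - p) ≤ 1 - p := min_le_right _ _
  have hq1 : min p (1 - p) ≤ 1 := hqp.trans hp1.le
  have ht0 : (0:ℝ) ≤ (min p (1 - p))⁻¹ := (inv_pos.mpr hq).le
  have hqi : min p (1 - p) * (min p (1 - p))⁻¹ = 1 := mul_inv_cancel₀ hq.ne'
  have ht1 : 1 ≤ (1 - p) * (min p (1 - p))⁻¹ :=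
    hqi.symm.trans_le (mul_le_mul_of_nonneg_right hq1p ht0)
  have ht2 : 1 ≤ p * (min p (1 - p))⁻¹ :=
    hqi.symm.trans_le (mul_le_mul_of_nonneg_right hqp ht0)
  have ht3 : 1 ≤ (min p (1 - p))⁻¹ := by nlinarith
  have hc : (0:ℝ) ≤ p * (1 - p) := mul_nonneg hp0.le h1p
  have key : ∀ x : Fin m → Bool,
      min p (1 - p) * (∑ a : Bool, ∑ b : Bool,
        if f x a b ≠ f x (!a) b then mu p x * w p a * w p b else 0)
      ≤ ((∑ a : Bool, if f x a a ≠ f x (!a) (!a) then mu p x * w p a else 0)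
        + (1 / min p (1 - p)) * (∑ a : Bool, ∑ b : Bool,
            if f x a b ≠ f x a (!b) then mu p x * w p a * w p b else 0)) := by
    intro x
    have hmu : 0 ≤ mu p x := Finset.prod_nonneg (fun i _ => by
      unfold w; cases x i <;> simp <;> linarith)
    simp only [Fintype.sum_bool, one_div]
    simp only [w, Bool.not_true, Bool.not_false, if_true, if_false]
    cases h00 : f x false false <;> cases h01 : f x false true <;>
      cases h10 : f x true false <;> cases h11 : f x true true <;>
      simp [h00, h01, h10, h11] <;>
      nlinarith [mul_nonneg hmu (sub_nonneg.mpr hq1),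
        mul_nonneg hmu (sub_nonneg.mpr ht3),
        mul_le_mul_of_nonneg_left ht1 (mul_nonneg hmu hp0.le),
        mul_le_mul_of_nonneg_left ht2 (mul_nonneg hmu h1p),
        mul_nonneg (mul_nonneg (mul_nonneg hmu hp0.le) hp0.le) ht0,
        mul_nonneg (mul_nonneg (mul_nonneg hmu h1p) h1p) ht0,
        mul_nonneg (mul_nonneg hmu hp0.le) (sub_nonneg.mpr hq1),
        mul_nonneg (mul_nonneg hmu h1p) (sub_nonneg.mpr hq1),
        mul_nonneg hmu ht0,
        mul_nonneg (mul_nonneg hmu hp0.le) ht0,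
        mul_nonneg (mul_nonneg hmu h1p) ht0,
        mul_nonneg (mul_nonneg hmu hp0.le) h1p]
  unfold infMinor infA infB
  rw [ge_iff_le, sub_le_iff_le_add]
  have expand : ∀ (c : ℝ) (g : (Fin m → Bool) → ℝ),
      c * (p * (1 - p) * ∑ x : Fin m → Bool, g x)
        = p * (1 - p) * ∑ x : Fin m → Bool, c * g x := by
    intro c g
    rw [← Finset.mul_sum]; ring
  rw [expand, expand, ← mul_add, ← Finset.sum_add_distrib]
  exact mul_le_mul_of_nonneg_left (Finset.sum_le_sum fun x _ => key x) hc
end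

section
/- For every λ ∈ (0,1/2) and δ > 0 there exist constants γ, β > 0 (depending only on λ, δ) such that: for all p ∈ (λ, 1−λ) and all h : {0,1}^{2n} → {0,1} with E_{μ_p}[h] ≥ δ and total influence I^{(p)}(h) ≤ γ·n, it holds that E_{z∼ρ_p}[h(z)] ≥ β, where ρ_p is the pull-back distribution. -/
open Finset

def bflip {n : ℕ} (x : Fin n → Bool) (i : Fin n) : Fin n → Bool :=
  Function.update x i (!(x i))

/-- `Inf_i^{(p)}(h) = p(1−p)·Pr_{μ_p}[h(x) ≠ h(x⊕i)]` -/
noncomputable def pinf (p : ℝ) {n : ℕ} (h : (Fin n → Bool) → Bool) (i : Fin n) : ℝ :=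
  p * (1 - p) * ∑ x : Fin n → Bool, if h x ≠ h (bflip x i) then mu p x else 0

/-- total influence `I^{(p)}(h) = ∑_i Inf_i^{(p)}(h)` -/
noncomputable def totalInf (p : ℝ) {n : ℕ} (h : (Fin n → Bool) → Bool) : ℝ :=
  ∑ i, pinf p h i

/-- A 2-to-1 map `π : [2n] → [n]`: every fiber has exactly two elements. -/
abbrev IsTwoToOne {n : ℕ} (π : Fin (2*n) → Fin n) : Prop :=
  ∀ j : Fin n, (Finset.univ.filter (fun i => π i = j)).card = 2

/-- The pull-back distribution `ρ_p` on `{0,1}^{2n}`: draw a uniformly random 2-to-1 map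
`π : [2n] → [n]` and `x ∼ μ_{p,n}`, and output `z = π^{-1}(x)`, i.e. `z = x ∘ π`. -/
noncomputable def rho (p : ℝ) (n : ℕ) (z : Fin (2*n) → Bool) : ℝ :=
  (∑ π ∈ Finset.univ.filter (fun π : Fin (2*n) → Fin n => IsTwoToOne π),
      ∑ x : Fin n → Bool, if z = x ∘ π then mu p x else 0) /
    ((Finset.univ.filter (fun π : Fin (2*n) → Fin n => IsTwoToOne π)).card : ℝ)

/-!
Pick a coordinate `i` whose influence is at most the average `γ / 2`. Flipping `i` maps
odd-weight vectors to even-weight ones, changes `μ_p` by a factor at least `λ`, and changes `h`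
only on a set of `μ_p`-mass `O(γ / λ)`; hence `h` keeps `μ_p`-mass at least `λδ/2` on even-weight
vectors. On a vector `z` of weight `2k`, `ρ_p(z) / μ_p(z) = b_n(k) / b_{2n}(2k)`, where `b_m` is the
`Bin(m, p)` distribution, and by Vandermonde's identity and unimodality of `b_n`,
`b_{2n}(2k) = ∑_{i+j=2k} b_n(i) b_n(j) ≤ 2 b_n(k)`: so `ρ_p ≥ μ_p / 2` on even-weight vectors.
-/

open scoped Nat

section BitVectors

variable {n : ℕ} {p : ℝ}

def wt (z : Fin n → Bool) : ℕ := #{i | z i = true}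

lemma w_nonneg (hp0 : 0 ≤ p) (hp1 : p ≤ 1) (b : Bool) : 0 ≤ w p b := by
  cases b <;> simp [w] <;> linarith

lemma mu_nonneg (hp0 : 0 ≤ p) (hp1 : p ≤ 1) (x : Fin n → Bool) : 0 ≤ mu p x :=
  prod_nonneg fun _ _ => w_nonneg hp0 hp1 _

lemma mu_eq_pow_wt (x : Fin n → Bool) : mu p x = p ^ wt x * (1 - p) ^ (n - wt x) := by
  have hcompl : #{i | ¬x i = true} = n - wt x := by
    have := card_filter_add_card_filter_not (s := univ) (fun i => x i = true)
    rw [card_univ, Fintype.card_fin] at this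
    rw [wt]
    omega
  simp only [mu, w, prod_ite, prod_const, wt, hcompl]

lemma mu_update (x : Fin n → Bool) (i : Fin n) (b : Bool) :
    mu p (Function.update x i b) = w p b * ∏ j ∈ univ \ {i}, w p (x j) := by
  rw [mu, ← prod_update_of_mem (mem_univ i)]
  exact prod_congr rfl fun j _ => (Function.apply_update (fun _ => w p) x i b j)

lemma lam_mul_mu_le_mu_bflip {lam : ℝ} (hl0 : 0 ≤ lam) (hl : lam ≤ p) (hu : p ≤ 1 - lam)
    (x : Fin n → Bool) (i : Fin n) : lam * mu p x ≤ mu p (bflip x i) := by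
  have hR : 0 ≤ ∏ j ∈ univ \ {i}, w p (x j) :=
    prod_nonneg fun _ _ => w_nonneg (by linarith) (by linarith) _
  have hw : lam * w p (x i) ≤ w p (!x i) := by cases x i <;> simp [w] <;> nlinarith
  rw [bflip, mu_update, ← Function.update_eq_self i x, mu_update, Function.update_eq_self,
    ← mul_assoc]
  exact mul_le_mul_of_nonneg_right hw hR

lemma wt_update (z : Fin n → Bool) (i : Fin n) (b : Bool) :
    wt (Function.update z i b) = (if b then 1 else 0) + ∑ j ∈ univ \ {i}, if z j then 1 else 0 := by
  rw [wt, card_filter, ← sum_update_of_mem (mem_univ i)]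
  exact sum_congr rfl fun j _ =>
    Function.apply_update (fun _ (b : Bool) => if b then 1 else 0) z i b j

lemma even_wt_bflip_iff (z : Fin n → Bool) (i : Fin n) :
    Even (wt (bflip z i)) ↔ ¬Even (wt z) := by
  have h := wt_update z i (z i)
  rw [Function.update_eq_self] at h
  rw [bflip, wt_update, h, Nat.even_iff, Nat.even_iff]
  cases z i <;> simp <;> omega

lemma bflip_bflip (z : Fin n → Bool) (i : Fin n) : bflip (bflip z i) i = z := by
  simp [bflip]

end BitVectors

section Binomial

variable {n k : ℕ} {p : ℝ}

noncomputable def binomialProb (n : ℕ) (p : ℝ) (k : ℕ) : ℝ :=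
  n.choose k * p ^ k * (1 - p) ^ (n - k)

lemma binomialProb_nonneg (hp0 : 0 ≤ p) (hp1 : p ≤ 1) (k : ℕ) : 0 ≤ binomialProb n p k := by
  have := sub_nonneg.2 hp1
  unfold binomialProb
  positivity

lemma sum_range_binomialProb : ∑ k ∈ range (n + 1), binomialProb n p k = 1 := by
  have := (add_pow p (1 - p) n).symm
  simp only [add_sub_cancel, one_pow] at this
  rw [← this]
  exact sum_congr rfl fun k _ => by unfold binomialProb; ring

lemma sum_binomialProb_le_one (hp0 : 0 ≤ p) (hp1 : p ≤ 1) (s : Finset ℕ) :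
    ∑ k ∈ s, binomialProb n p k ≤ 1 := by
  calc ∑ k ∈ s, binomialProb n p k = ∑ k ∈ s with k ≤ n, binomialProb n p k := by
        refine (sum_filter_of_ne fun k _ hk => ?_).symm
        by_contra hlt
        exact hk (by simp [binomialProb, Nat.choose_eq_zero_of_lt (not_le.1 hlt)])
    _ ≤ ∑ k ∈ range (n + 1), binomialProb n p k :=
        sum_le_sum_of_subset_of_nonneg (fun k hk => by simp at hk ⊢; omega)
          fun k _ _ => binomialProb_nonneg hp0 hp1 k
    _ = 1 := sum_range_binomialProb

lemma binomialProb_symm (hk : k ≤ n) : binomialProb n (1 - p) (n - k) = binomialProb n p k := by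
  simp only [binomialProb, Nat.choose_symm hk, Nat.sub_sub_self hk, sub_sub_cancel]
  ring

lemma binomialProb_succ_mul (k : ℕ) :
    binomialProb n p (k + 1) * (k + 1) * (1 - p) = binomialProb n p k * (n - k : ℕ) * p := by
  rcases lt_or_ge k n with hk | hk
  · have hc : (n.choose (k + 1) : ℝ) * (k + 1) = n.choose k * (n - k : ℕ) := by
      exact_mod_cast Nat.choose_succ_right_eq n k
    have hq : (1 - p) ^ (n - k) = (1 - p) ^ (n - (k + 1)) * (1 - p) := by
      rw [← pow_succ]; congr 1; omega
    simp only [binomialProb, hq]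
    linear_combination p ^ k * p * (1 - p) ^ (n - (k + 1)) * (1 - p) * hc
  · simp [binomialProb, Nat.choose_eq_zero_of_lt (Nat.lt_succ_of_le hk), Nat.sub_eq_zero_of_le hk]

lemma binomialProb_le_of_le (hp0 : 0 ≤ p) (hp1 : p < 1)
    (hmode : (n - k : ℕ) * p ≤ (k + 1) * (1 - p)) {j : ℕ} (hj : k ≤ j) :
    binomialProb n p j ≤ binomialProb n p k := by
  refine antitoneOn_nat_Ici_of_succ_le (fun j hj => ?_) (Set.mem_Ici.2 le_rfl) (Set.mem_Ici.2 hj) hj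
  have hq : 0 < (j + 1) * (1 - p) := by positivity
  have hratio : (n - j : ℕ) * p ≤ (j + 1) * (1 - p) := by
    calc ((n - j : ℕ) : ℝ) * p ≤ (n - k : ℕ) * p := by gcongr
      _ ≤ (k + 1) * (1 - p) := hmode
      _ ≤ (j + 1) * (1 - p) := by gcongr
  refine le_of_mul_le_mul_right ?_ hq
  calc binomialProb n p (j + 1) * ((j + 1) * (1 - p))
      = binomialProb n p j * (n - j : ℕ) * p := by rw [← binomialProb_succ_mul]; ring
    _ ≤ binomialProb n p j * ((j + 1) * (1 - p)) := by
        rw [mul_assoc]; exact mul_le_mul_of_nonneg_left hratio (binomialProb_nonneg hp0 hp1.le j)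

lemma binomialProb_add (m n k : ℕ) :
    binomialProb (m + n) p k =
      ∑ ij ∈ antidiagonal k, binomialProb m p ij.1 * binomialProb n p ij.2 := by
  rw [binomialProb, Nat.add_choose_eq]
  push_cast
  rw [sum_mul, sum_mul]
  refine sum_congr rfl fun ij hij => ?_
  obtain ⟨i, j⟩ := ij
  rw [HasAntidiagonal.mem_antidiagonal] at hij
  subst hij
  by_cases hi : i ≤ m
  · by_cases hj : j ≤ n
    · have : m + n - (i + j) = (m - i) + (n - j) := by omega
      simp only [binomialProb, this, pow_add]
      ring
    · simp [binomialProb, Nat.choose_eq_zero_of_lt (not_le.1 hj)]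
  · simp [binomialProb, Nat.choose_eq_zero_of_lt (not_le.1 hi)]

lemma sum_antidiagonal_mul_le {f : ℕ → ℝ} (hf0 : ∀ j, 0 ≤ f j)
    (hf1 : ∑ j ∈ range (2 * k + 1), f j ≤ 1) (hk : ∀ j, k ≤ j → f j ≤ f k) :
    ∑ ij ∈ antidiagonal (2 * k), f ij.1 * f ij.2 ≤ 2 * f k := by
  -- of two indices summing to `2k`, one is at least `k`
  have hpoint : ∀ ij ∈ antidiagonal (2 * k), f ij.1 * f ij.2 ≤ f k * (f ij.1 + f ij.2) := by
    rintro ⟨i, j⟩ hij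
    rw [HasAntidiagonal.mem_antidiagonal] at hij
    rcases le_total k i with hi | hj
    · nlinarith [hk i hi, hf0 i, hf0 j]
    · nlinarith [hk j (by omega), hf0 i, hf0 j]
  have hsnd : ∑ ij ∈ antidiagonal (2 * k), f ij.2 = ∑ ij ∈ antidiagonal (2 * k), f ij.1 :=
    Nat.sum_antidiagonal_swap (f := fun ij => f ij.1)
  have hfst : ∑ ij ∈ antidiagonal (2 * k), f ij.1 = ∑ j ∈ range (2 * k + 1), f j :=
    Nat.sum_antidiagonal_eq_sum_range_succ_mk (fun ij => f ij.1) _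
  calc _ ≤ ∑ ij ∈ antidiagonal (2 * k), f k * (f ij.1 + f ij.2) := sum_le_sum hpoint
    _ = 2 * f k * ∑ j ∈ range (2 * k + 1), f j := by
        rw [← mul_sum, sum_add_distrib, hsnd, hfst]; ring
    _ ≤ 2 * f k * 1 := by gcongr; linarith [hf0 k]
    _ = 2 * f k := mul_one _

lemma binomialProb_two_mul_le (hp0 : 0 < p) (hp1 : p < 1) (hk : k ≤ n) :
    binomialProb (2 * n) p (2 * k) ≤ 2 * binomialProb n p k := by
  have of_mode : ∀ {q : ℝ} {l : ℕ}, 0 ≤ q → q < 1 → (n - l : ℕ) * q ≤ (l + 1) * (1 - q) →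
      binomialProb (2 * n) q (2 * l) ≤ 2 * binomialProb n q l := fun hq0 hq1 hmode => by
    rw [two_mul n, binomialProb_add]
    exact sum_antidiagonal_mul_le (binomialProb_nonneg hq0 hq1.le)
      (sum_binomialProb_le_one hq0 hq1.le _) fun j hj => binomialProb_le_of_le hq0 hq1 hmode hj
  rcases le_total ((n - k : ℕ) * p) ((k + 1) * (1 - p)) with hmode | hmode
  · exact of_mode hp0.le hp1 hmode
  -- otherwise the mode lies above `k`, and the symmetry `p ↔ 1 - p`, `k ↔ n - k` reflects it below
  · have hrefl := of_mode (q := 1 - p) (l := n - k) (by linarith) (by linarith) (by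
      rw [Nat.sub_sub_self hk, sub_sub_cancel]
      push_cast [hk] at hmode ⊢
      nlinarith)
    rwa [Nat.mul_sub, binomialProb_symm hk,
      binomialProb_symm (Nat.mul_le_mul_left 2 hk)] at hrefl

end Binomial

section Permutations

open Equiv

variable {α β : Type*} [Fintype α] [DecidableEq β]

lemma exists_perm_comp_eq {f g : α → β}
    (hfg : ∀ b, Fintype.card {a // f a = b} = Fintype.card {a // g a = b}) :
    ∃ σ : Perm α, g ∘ σ = f :=
  ⟨ofFiberEquiv fun b => Fintype.equivOfCardEq (hfg b), funext (ofFiberEquiv_map _)⟩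

lemma card_perm_comp_eq [DecidableEq α] [Fintype β] {f g : α → β}
    (hfg : ∀ b, Fintype.card {a // f a = b} = Fintype.card {a // g a = b}) :
    #{σ : Perm α | g ∘ σ = f} = ∏ b, (Fintype.card {a // f a = b})! := by
  obtain ⟨σ₀, rfl⟩ := exists_perm_comp_eq hfg
  rw [← DomMulAct.stabilizer_card, ← Fintype.card_subtype]
  exact Fintype.card_congr (subtypeEquiv (Equiv.mulLeft σ₀⁻¹) fun σ => by
    simp [Function.comp_def])

end Permutations

lemma sum_div_card_eq_of_card_fiber_eq {α β : Type*} [Fintype α] [Nonempty α] [DecidableEq β]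
    {f : α → β} {s : Finset β} (hf : ∀ a, f a ∈ s) {K : ℕ} (hK : ∀ b ∈ s, #{a | f a = b} = K)
    (g : β → ℝ) : (∑ b ∈ s, g b) / #s = (∑ a, g (f a)) / Fintype.card α := by
  have hsum : ∑ a, g (f a) = K * ∑ b ∈ s, g b := by
    rw [← sum_fiberwise_of_maps_to (fun a _ => hf a), mul_sum]
    refine sum_congr rfl fun b hb => ?_
    rw [sum_congr rfl fun a ha => by rw [(mem_filter.1 ha).2], sum_const, hK b hb, nsmul_eq_mul]
  have hcard : Fintype.card α = K * #s := by
    rw [← card_univ, card_eq_sum_card_fiberwise fun a _ => hf a, sum_congr rfl hK, sum_const,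
      smul_eq_mul, mul_comm]
  have hK0 : (K : ℝ) ≠ 0 := by
    obtain ⟨a⟩ := ‹Nonempty α›
    rw [← hK (f a) (hf a)]
    exact_mod_cast (card_pos.2 ⟨a, by simp⟩).ne'
  rw [hsum, hcard, Nat.cast_mul, mul_div_mul_left _ _ hK0]

section TwoToOne

variable {n : ℕ}

lemma IsTwoToOne.card_fiber {π : Fin (2 * n) → Fin n} (hπ : IsTwoToOne π) (j : Fin n) :
    Fintype.card {i // π i = j} = 2 := by
  rw [Fintype.card_subtype, hπ j]

lemma IsTwoToOne.comp_perm {π : Fin (2 * n) → Fin n} (hπ : IsTwoToOne π)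
    (σ : Equiv.Perm (Fin (2 * n))) : IsTwoToOne (π ∘ σ) := fun j => by
  rw [← Fintype.card_subtype]
  exact (Fintype.card_congr (σ.subtypeEquiv fun _ => Iff.rfl)).trans (hπ.card_fiber j)

lemma isTwoToOne_modNat : IsTwoToOne (Fin.modNat : Fin (2 * n) → Fin n) := fun j => by
  rw [← Fintype.card_subtype,
    Fintype.card_congr (finProdFinEquiv.symm.subtypeEquiv (q := fun q => q.2 = j) fun i => by simp)]
  rw [Fintype.card_subtype,
    show ({q : Fin 2 × Fin n | q.2 = j} : Finset _) = univ ×ˢ {j} by ext ⟨a, b⟩; simp [eq_comm]]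
  simp

lemma wt_comp_of_isTwoToOne {π : Fin (2 * n) → Fin n} (hπ : IsTwoToOne π) (x : Fin n → Bool) :
    wt (x ∘ π) = 2 * wt x := by
  calc wt (x ∘ π) = ∑ j with x j = true, #{a | π a = j} := by
        rw [wt, card_eq_sum_card_fiberwise (t := {j | x j = true}) fun a ha => by simpa using ha]
        refine sum_congr rfl fun j hj => congrArg card (ext fun a => ?_)
        simp only [mem_filter, mem_univ, true_and, Function.comp_apply] at hj ⊢
        exact ⟨And.right, fun h => ⟨h ▸ hj, h⟩⟩
    _ = 2 * wt x := by rw [sum_congr rfl fun j _ => hπ j, sum_const, smul_eq_mul, mul_comm, wt]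

end TwoToOne

section Pullback

variable {m n : ℕ} {p : ℝ}

lemma card_fiber_false (z : Fin m → Bool) : Fintype.card {i // z i = false} = m - wt z := by
  have := card_filter_add_card_filter_not (s := univ) (fun i => z i = true)
  rw [card_univ, Fintype.card_fin] at this
  simp only [Fintype.card_subtype, wt, Bool.not_eq_true] at this ⊢
  omega

lemma card_fiber_eq_of_wt_eq {f g : Fin m → Bool} (h : wt f = wt g) (b : Bool) :
    Fintype.card {i // f i = b} = Fintype.card {i // g i = b} := by
  cases b
  · rw [card_fiber_false, card_fiber_false, h]
  · rw [Fintype.card_subtype, Fintype.card_subtype]; exact h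

lemma prod_factorial_card_fiber (z : Fin m → Bool) :
    ∏ b, (Fintype.card {i // z i = b})! = (wt z)! * (m - wt z)! := by
  rw [Fintype.prod_bool, card_fiber_false, Fintype.card_subtype, wt]

lemma card_wt_eq (k : ℕ) : #{x : Fin n → Bool | wt x = k} = n.choose k := by
  rw [show n.choose k = #(powersetCard k (univ : Finset (Fin n))) by simp]
  refine card_nbij' (fun x => ({i | x i = true} : Finset (Fin n))) (fun s i => decide (i ∈ s))
    ?_ ?_ ?_ ?_
  · intro x hx
    rw [mem_coe, mem_filter] at hx
    exact mem_powersetCard.2 ⟨subset_univ _, hx.2⟩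
  · intro s hs
    rw [mem_coe, mem_powersetCard] at hs
    refine mem_filter.2 ⟨mem_univ _, ?_⟩
    simpa [wt] using hs.2
  · intro x _; ext i; simp
  · intro s _; ext i; simp

lemma sum_mu_wt_eq (k : ℕ) : ∑ x : Fin n → Bool with wt x = k, mu p x = binomialProb n p k := by
  rw [sum_congr rfl fun x hx => by rw [mu_eq_pow_wt, (mem_filter.1 hx).2], sum_const, card_wt_eq,
    nsmul_eq_mul, binomialProb, mul_assoc]

-- a uniformly random 2-to-1 map is distributed as `Fin.modNat ∘ σ` for a uniform permutation `σ`
lemma rho_eq_sum_perm (z : Fin (2 * n) → Bool) :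
    rho p n z = (∑ σ : Equiv.Perm (Fin (2 * n)), ∑ x : Fin n → Bool,
      if z = x ∘ (Fin.modNat ∘ σ) then mu p x else 0) / (2 * n)! := by
  have hfiber : ∀ π ∈ ({π | IsTwoToOne π} : Finset (Fin (2 * n) → Fin n)),
      #{σ : Equiv.Perm (Fin (2 * n)) | Fin.modNat ∘ σ = π} = ∏ _j : Fin n, 2! := fun π hπ => by
    have hπ : IsTwoToOne π := (mem_filter.1 hπ).2
    rw [card_perm_comp_eq fun j => by rw [hπ.card_fiber, isTwoToOne_modNat.card_fiber]]
    simp only [hπ.card_fiber]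
  rw [rho,
    sum_div_card_eq_of_card_fiber_eq (f := fun σ : Equiv.Perm (Fin (2 * n)) => Fin.modNat ∘ σ)
    (fun σ => mem_filter.2 ⟨mem_univ _, isTwoToOne_modNat.comp_perm σ⟩) hfiber,
    Fintype.card_perm, Fintype.card_fin]

lemma binomialProb_mul_le_sum_perm (hp0 : 0 ≤ p) (hp1 : p ≤ 1) {z : Fin (2 * n) → Bool} {k : ℕ}
    (hz : wt z = 2 * k) :
    binomialProb n p k * ((2 * k)! * (2 * n - 2 * k)! : ℕ) ≤
      ∑ σ : Equiv.Perm (Fin (2 * n)), ∑ x : Fin n → Bool,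
        if z = x ∘ (Fin.modNat ∘ σ) then mu p x else 0 := by
  have hcount : ∀ x : Fin n → Bool, wt x = k →
      #{σ : Equiv.Perm (Fin (2 * n)) | (x ∘ Fin.modNat) ∘ σ = z} = (2 * k)! * (2 * n - 2 * k)! :=
    fun x hx => by
      rw [card_perm_comp_eq (card_fiber_eq_of_wt_eq (by rw [hz, wt_comp_of_isTwoToOne
        isTwoToOne_modNat, hx])), prod_factorial_card_fiber, hz]
  rw [sum_comm, ← sum_mu_wt_eq, sum_mul]
  calc ∑ x : Fin n → Bool with wt x = k, mu p x * ((2 * k)! * (2 * n - 2 * k)! : ℕ)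
      = ∑ x : Fin n → Bool with wt x = k, ∑ σ : Equiv.Perm (Fin (2 * n)),
          if z = x ∘ (Fin.modNat ∘ σ) then mu p x else 0 := by
        refine sum_congr rfl fun x hx => ?_
        rw [← hcount x (mem_filter.1 hx).2, ← sum_boole, mul_sum]
        exact sum_congr rfl fun σ _ => by simp [eq_comm, Function.comp_assoc]
    _ ≤ _ := sum_le_sum_of_subset_of_nonneg (filter_subset _ _) fun x _ _ =>
        sum_nonneg fun σ _ => by split_ifs <;> simp [mu_nonneg hp0 hp1]

lemma half_mu_le_rho (hp0 : 0 < p) (hp1 : p < 1) {z : Fin (2 * n) → Bool} (hz : Even (wt z)) :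
    mu p z / 2 ≤ rho p n z := by
  obtain ⟨k, hk⟩ := hz
  have hz : wt z = 2 * k := by omega
  have hkn : k ≤ n := by
    have : wt z ≤ 2 * n := (card_filter_le _ _).trans (by simp)
    omega
  rw [rho_eq_sum_perm, le_div_iff₀ (by positivity)]
  calc mu p z / 2 * (2 * n)!
      = binomialProb (2 * n) p (2 * k) / 2 * ((2 * k)! * (2 * n - 2 * k)! : ℕ) := by
        rw [mu_eq_pow_wt, hz, binomialProb,
          ← Nat.choose_mul_factorial_mul_factorial (Nat.mul_le_mul_left 2 hkn)]
        push_cast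
        ring
    _ ≤ binomialProb n p k * ((2 * k)! * (2 * n - 2 * k)! : ℕ) := by
        gcongr
        linarith [binomialProb_two_mul_le hp0 hp1 hkn]
    _ ≤ _ := binomialProb_mul_le_sum_perm hp0.le hp1.le hz

lemma rho_nonneg (hp0 : 0 ≤ p) (hp1 : p ≤ 1) (z : Fin (2 * n) → Bool) : 0 ≤ rho p n z :=
  div_nonneg (sum_nonneg fun _ _ => sum_nonneg fun x _ => by
    split_ifs <;> simp [mu_nonneg hp0 hp1]) (Nat.cast_nonneg _)

end Pullback

section Influence

variable {n : ℕ} {p lam : ℝ}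

lemma exists_pinf_le {γ : ℝ} (hn : 1 ≤ n) {h : (Fin (2 * n) → Bool) → Bool}
    (hI : totalInf p h ≤ γ * n) : ∃ i, pinf p h i ≤ γ / 2 := by
  have : Nonempty (Fin (2 * n)) := ⟨⟨0, by omega⟩⟩
  rw [totalInf] at hI
  obtain ⟨i, -, hi⟩ := exists_le_of_sum_le (s := univ) (f := pinf p h) (g := fun _ => γ / 2)
    univ_nonempty (by
      rw [sum_const, card_univ, Fintype.card_fin, nsmul_eq_mul]
      push_cast
      linarith)
  exact ⟨i, hi⟩

lemma lam_mul_odd_mass_le (hl0 : 0 ≤ lam) (hl : lam ≤ p) (hu : p ≤ 1 - lam)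
    (h : (Fin n → Bool) → Bool) (i : Fin n) :
    lam * ∑ z with h z ∧ ¬Even (wt z), mu p z ≤
      ∑ z with h z ∧ Even (wt z), mu p z + ∑ z with h z ≠ h (bflip z i), mu p z := by
  have hmu : ∀ z : Fin n → Bool, 0 ≤ mu p z := mu_nonneg (by linarith) (by linarith)
  have hflip : ∑ z with h z ∧ ¬Even (wt z), mu p (bflip z i) =
      ∑ y with h (bflip y i) ∧ Even (wt y), mu p y :=
    sum_nbij' (bflip · i) (bflip · i)
      (fun z hz => by
        rw [mem_filter] at hz ⊢
        rw [bflip_bflip]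
        exact ⟨mem_univ _, hz.2.1, (even_wt_bflip_iff z i).2 hz.2.2⟩)
      (fun y hy => by
        rw [mem_filter] at hy ⊢
        exact ⟨mem_univ _, hy.2.1, fun he => (even_wt_bflip_iff y i).1 he hy.2.2⟩)
      (fun z _ => bflip_bflip z i) (fun y _ => bflip_bflip y i) (fun z _ => rfl)
  calc lam * ∑ z with h z ∧ ¬Even (wt z), mu p z
      ≤ ∑ z with h z ∧ ¬Even (wt z), mu p (bflip z i) := by
        rw [mul_sum]
        exact sum_le_sum fun z _ => lam_mul_mu_le_mu_bflip hl0 hl hu z i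
    _ = ∑ y with h (bflip y i) ∧ Even (wt y), mu p y := hflip
    _ ≤ _ := by
        simp only [sum_filter, ← sum_add_distrib]
        refine sum_le_sum fun y _ => ?_
        have := hmu y
        split_ifs <;> simp_all

lemma half_even_mass_le_pullback (hp0 : 0 < p) (hp1 : p < 1) (h : (Fin (2 * n) → Bool) → Bool) :
    (∑ z with h z ∧ Even (wt z), mu p z) / 2 ≤
      ∑ z : Fin (2 * n) → Bool, rho p n z * (if h z then 1 else 0) := by
  simp only [mul_ite, mul_one, mul_zero]
  rw [← sum_filter, sum_div]
  calc ∑ z with h z ∧ Even (wt z), mu p z / 2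
      ≤ ∑ z with h z ∧ Even (wt z), rho p n z :=
        sum_le_sum fun z hz => half_mu_le_rho hp0 hp1 (mem_filter.1 hz).2.2
    _ ≤ ∑ z with h z, rho p n z :=
        sum_le_sum_of_subset_of_nonneg (monotone_filter_right _ fun _ _ => And.left)
          fun z _ _ => rho_nonneg hp0.le hp1.le z

end Influence

/-- For every `λ ∈ (0,1/2)` and `δ > 0` there are `γ, β > 0` such that: for all
`p ∈ (λ,1−λ)` and Boolean `h : {0,1}^{2n} → {0,1}` with `E_{μ_p}[h] ≥ δ` and
`I^{(p)}(h) ≤ γ·n`, the pull-back expectation satisfies `E_{z∼ρ_p}[h] ≥ β`. -/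
theorem expectation_large_in_pullback :
    ∀ lam : ℝ, lam ∈ Set.Ioo (0:ℝ) (1/2) → ∀ δ : ℝ, 0 < δ →
    ∃ γ : ℝ, 0 < γ ∧ ∃ β : ℝ, 0 < β ∧
      ∀ (n : ℕ), 1 ≤ n → ∀ p : ℝ, p ∈ Set.Ioo lam (1 - lam) →
      ∀ h : (Fin (2*n) → Bool) → Bool,
        δ ≤ (∑ x : Fin (2*n) → Bool, mu p x * (if h x then 1 else 0)) →
        totalInf p h ≤ γ * n →
        β ≤ ∑ z : Fin (2*n) → Bool, rho p n z * (if h z then 1 else 0) := by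
  rintro lam ⟨hl0, hl2⟩ δ hδ
  refine ⟨lam ^ 2 * δ / 4, by positivity, lam * δ / 4, by positivity, ?_⟩
  rintro n hn p ⟨hlp, hpu⟩ h hE hI
  obtain ⟨i, hi⟩ := exists_pinf_le hn hI
  have hodd := lam_mul_odd_mass_le hl0.le hlp.le hpu.le h i
  have hpull := half_even_mass_le_pullback (p := p) (by linarith) (by linarith) h
  set E := ∑ z with h z ∧ Even (wt z), mu p z
  set O := ∑ z with h z ∧ ¬Even (wt z), mu p z
  set D := ∑ z with h z ≠ h (bflip z i), mu p z
  have hmu : ∀ z : Fin (2 * n) → Bool, 0 ≤ mu p z := mu_nonneg (by linarith) (by linarith)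
  have hsplit : E + O = ∑ x : Fin (2*n) → Bool, mu p x * (if h x then 1 else 0) := by
    simp only [E, O, mul_ite, mul_one, mul_zero, ← sum_filter, ← filter_filter]
    exact sum_filter_add_sum_filter_not _ _ _
  have hE0 : 0 ≤ E := sum_nonneg fun z _ => hmu z
  have hD0 : 0 ≤ D := sum_nonneg fun z _ => hmu z
  have hpinf : pinf p h i = p * (1 - p) * D := by rw [pinf, ← sum_filter]
  have hD : D ≤ lam * δ / 4 := by
    have : lam / 2 * D ≤ p * (1 - p) * D := by gcongr; nlinarith
    nlinarith
  nlinarith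
end

section
/- Let f : {0,1}^n → {0,1} be computed as the sign of a degree-k real polynomial (f ∈ PTF_k). For every γ > 0 there exists d = d(k, γ) such that ‖f^{>d}‖² ≤ γ over the uniform distribution, assuming the noise sensitivity bound NS_{δ,1/2}[f] ≤ C(k)·((1−δ)/2)^{1/(4k+6)} for all δ ∈ [0,1]. -/
open Finset

noncomputable def chi (p : ℝ) {n : ℕ} (S : Finset (Fin n)) (x : Fin n → Bool) : ℝ :=
  ∏ i ∈ S, ((if x i then (1:ℝ) else 0) - p) / Real.sqrt (p * (1 - p))

noncomputable def coeff (p : ℝ) {n : ℕ} (f : (Fin n → Bool) → ℝ) (S : Finset (Fin n)) : ℝ :=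
  ∑ x : Fin n → Bool, mu p x * (f x * chi p S x)

noncomputable def noiseK (δ p : ℝ) {n : ℕ} (x y : Fin n → Bool) : ℝ :=
  ∏ i, ((if y i = x i then δ else 0) + (1 - δ) * w p (y i))

/-- noise sensitivity `NS_{δ,p}[f] = Pr[f(x) ≠ f(y)]`, `x ∼ μ_p`, `y ∼ N_{δ,p}(x)` -/
noncomputable def NS (δ p : ℝ) {n : ℕ} (f : (Fin n → Bool) → ℝ) : ℝ :=
  ∑ x : Fin n → Bool, ∑ y : Fin n → Bool,
    (mu p x * noiseK δ p x y) * (if f x ≠ f y then 1 else 0)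

/-- `f` is a polynomial threshold function of degree at most `k`:
`f(x) = 1[P(x) ≥ 0]` for a real polynomial `P` of degree `≤ k`. -/
def IsPTF (k : ℕ) {n : ℕ} (f : (Fin n → Bool) → Bool) : Prop :=
  ∃ P : MvPolynomial (Fin n) ℝ, P.totalDegree ≤ k ∧
    ∀ x, f x = decide (0 ≤ MvPolynomial.eval (fun i => if x i then (1:ℝ) else 0) P)

/- ### Auxiliary lemmas -/

noncomputable def eSign (b : Bool) : ℝ := if b then 1 else -1

lemma sum_prod_bool {n : ℕ} (g : Fin n → Bool → ℝ) :
    ∑ x : Fin n → Bool, ∏ i, g i (x i) = ∏ i, (g i true + g i false) := by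
  classical
  rw [← Fintype.piFinset_univ, ← Finset.prod_univ_sum]
  simp

lemma mu_half {n : ℕ} (x : Fin n → Bool) : mu (1/2) x = (1/2)^n := by
  unfold mu w
  have h : ∀ i, (if x i then (1/2 : ℝ) else 1 - 1/2) = 1/2 := fun i => by cases x i <;> norm_num
  simp only [h, Finset.prod_const, Finset.card_univ]
  simp

lemma chi_half {n : ℕ} (S : Finset (Fin n)) (x : Fin n → Bool) :
    chi (1/2) S x = ∏ i ∈ S, eSign (x i) := by
  have h : Real.sqrt ((1/2) * (1 - 1/2)) = 1/2 := by
    rw [show (1/2 : ℝ) * (1 - 1/2) = (1/2)^2 by norm_num, Real.sqrt_sq (by norm_num)]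
  unfold chi eSign
  refine Finset.prod_congr rfl fun i _ => ?_
  rw [h]
  cases x i <;> norm_num

lemma key_kernel {n : ℕ} (δ : ℝ) (x y : Fin n → Bool) :
    ∑ S : Finset (Fin n), δ^S.card * ((∏ i ∈ S, eSign (x i)) * (∏ i ∈ S, eSign (y i)))
      = 2^n * noiseK δ (1/2) x y := by
  have h1 : ∀ S : Finset (Fin n),
      δ^S.card * ((∏ i ∈ S, eSign (x i)) * (∏ i ∈ S, eSign (y i)))
      = (∏ i ∈ S, δ * (eSign (x i) * eSign (y i))) * ∏ i ∈ univ \ S, (1:ℝ) := by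
    intro S
    simp only [Finset.prod_mul_distrib, Finset.prod_const, one_pow]
    ring
  simp only [h1]
  rw [show (univ : Finset (Finset (Fin n))) = (univ : Finset (Fin n)).powerset from
    (Finset.powerset_univ).symm, ← Finset.prod_add]
  unfold noiseK
  have h2 : ∀ i : Fin n, δ * (eSign (x i) * eSign (y i)) + 1
      = 2 * ((if y i = x i then δ else 0) + (1-δ) * w (1/2) (y i)) := by
    intro i; unfold eSign w; cases x i <;> cases y i <;> norm_num <;> ring
  simp only [h2]
  rw [Finset.prod_mul_distrib, Finset.prod_const, Finset.card_univ]
  simp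

lemma fourier_noise {n : ℕ} (δ : ℝ) (f : (Fin n → Bool) → ℝ) :
    ∑ S : Finset (Fin n), δ^S.card * (coeff (1/2) f S)^2
      = ∑ x : Fin n → Bool, ∑ y : Fin n → Bool,
          mu (1/2) x * noiseK δ (1/2) x y * (f x * f y) := by
  have hc : ∀ S, coeff (1/2) f S
      = ∑ x : Fin n → Bool, (1/2)^n * (f x * ∏ i ∈ S, eSign (x i)) := by
    intro S; unfold coeff
    exact Finset.sum_congr rfl fun x _ => by rw [mu_half, chi_half]
  have hpow : (1/2:ℝ)^n * 2^n = 1 := by rw [← mul_pow]; norm_num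
  calc ∑ S : Finset (Fin n), δ^S.card * (coeff (1/2) f S)^2
      = ∑ S : Finset (Fin n), ∑ x : Fin n → Bool, ∑ y : Fin n → Bool,
          ((1/2)^n * f x * ((1/2)^n * f y)) *
            (δ^S.card * ((∏ i ∈ S, eSign (x i)) * (∏ i ∈ S, eSign (y i)))) := by
        refine Finset.sum_congr rfl fun S _ => ?_
        rw [hc, sq, Finset.sum_mul_sum, Finset.mul_sum]
        refine Finset.sum_congr rfl fun x _ => ?_
        rw [Finset.mul_sum]
        exact Finset.sum_congr rfl fun y _ => by ring
    _ = ∑ x : Fin n → Bool, ∑ y : Fin n → Bool, ∑ S : Finset (Fin n),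
          ((1/2)^n * f x * ((1/2)^n * f y)) *
            (δ^S.card * ((∏ i ∈ S, eSign (x i)) * (∏ i ∈ S, eSign (y i)))) := by
        rw [Finset.sum_comm]
        exact Finset.sum_congr rfl fun x _ => Finset.sum_comm
    _ = ∑ x : Fin n → Bool, ∑ y : Fin n → Bool,
          mu (1/2) x * noiseK δ (1/2) x y * (f x * f y) := by
        refine Finset.sum_congr rfl fun x _ => Finset.sum_congr rfl fun y _ => ?_
        rw [← Finset.mul_sum, key_kernel, mu_half]
        have h : ((1/2:ℝ)^n * f x * ((1/2)^n * f y)) * (2^n * noiseK δ (1/2) x y)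
            = ((1/2:ℝ)^n * 2^n) * ((1/2)^n * noiseK δ (1/2) x y * (f x * f y)) := by ring
        rw [h, hpow, one_mul]

lemma noiseK_one {n : ℕ} (x y : Fin n → Bool) :
    noiseK 1 (1/2) x y = if y = x then 1 else 0 := by
  unfold noiseK
  simp only [sub_self, zero_mul, add_zero]
  rw [Finset.prod_boole]
  simp [funext_iff]

lemma kernel_sum_one {n : ℕ} (δ : ℝ) (x : Fin n → Bool) :
    ∑ y : Fin n → Bool, noiseK δ (1/2) x y = 1 := by
  unfold noiseK
  rw [sum_prod_bool (g := fun i b => (if b = x i then δ else 0) + (1 - δ) * w (1/2) b)]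
  have h : ∀ i : Fin n, ((if true = x i then δ else 0) + (1 - δ) * w (1/2) true)
      + ((if false = x i then δ else 0) + (1 - δ) * w (1/2) false) = 1 := by
    intro i; unfold w; cases x i <;> simp <;> ring
  simp only [h, Finset.prod_const_one]

lemma kernel_sum_one' {n : ℕ} (δ : ℝ) (y : Fin n → Bool) :
    ∑ x : Fin n → Bool, noiseK δ (1/2) x y = 1 := by
  unfold noiseK
  rw [sum_prod_bool (g := fun i b => (if y i = b then δ else 0) + (1 - δ) * w (1/2) (y i))]
  have h : ∀ i : Fin n, ((if y i = true then δ else 0) + (1 - δ) * w (1/2) (y i))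
      + ((if y i = false then δ else 0) + (1 - δ) * w (1/2) (y i)) = 1 := by
    intro i; unfold w; cases y i <;> simp <;> ring
  simp only [h, Finset.prod_const_one]

lemma parseval {n : ℕ} (f : (Fin n → Bool) → ℝ) :
    ∑ S : Finset (Fin n), (coeff (1/2) f S)^2
      = ∑ x : Fin n → Bool, mu (1/2) x * (f x)^2 := by
  have h := fourier_noise 1 f
  simp only [one_pow, one_mul] at h
  rw [h]
  refine Finset.sum_congr rfl fun x _ => ?_
  simp only [noiseK_one]
  rw [Finset.sum_eq_single x]
  · simp [sq]
  · intro y _ hy; simp [hy]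
  · intro hx; exact absurd (Finset.mem_univ x) hx

lemma NS_eq {n : ℕ} (δ : ℝ) (f : (Fin n → Bool) → Bool) :
    NS δ (1/2) (fun x => if f x then (1:ℝ) else 0)
      = 2 * ∑ S : Finset (Fin n),
          (1 - δ^S.card) * (coeff (1/2) (fun x => if f x then (1:ℝ) else 0) S)^2 := by
  set F : (Fin n → Bool) → ℝ := fun x => if f x then (1:ℝ) else 0 with hF
  have hind : ∀ x y : Fin n → Bool, (if F x ≠ F y then (1:ℝ) else 0) = (F x - F y)^2 := by
    intro x y
    by_cases hx : f x <;> by_cases hy : f y <;> simp [hF, hx, hy]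
  have step1 : NS δ (1/2) F
      = ∑ x : Fin n → Bool, ∑ y : Fin n → Bool,
          ((mu (1/2) x * F x^2) * noiseK δ (1/2) x y
            - 2 * (mu (1/2) x * noiseK δ (1/2) x y * (F x * F y))
            + (F y^2 * ((1/2:ℝ)^n * noiseK δ (1/2) x y))) := by
    unfold NS
    refine Finset.sum_congr rfl fun x _ => Finset.sum_congr rfl fun y _ => ?_
    rw [hind, mu_half]
    ring
  have split : NS δ (1/2) F
      = (∑ x : Fin n → Bool, ∑ y : Fin n → Bool, (mu (1/2) x * F x^2) * noiseK δ (1/2) x y)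
        - 2 * (∑ x : Fin n → Bool, ∑ y : Fin n → Bool,
            mu (1/2) x * noiseK δ (1/2) x y * (F x * F y))
        + (∑ x : Fin n → Bool, ∑ y : Fin n → Bool,
            F y^2 * ((1/2:ℝ)^n * noiseK δ (1/2) x y)) := by
    rw [step1]
    simp only [Finset.sum_add_distrib, Finset.sum_sub_distrib, ← Finset.mul_sum]
  have p1 : (∑ x : Fin n → Bool, ∑ y : Fin n → Bool,
        (mu (1/2) x * F x^2) * noiseK δ (1/2) x y)
      = ∑ x : Fin n → Bool, mu (1/2) x * F x^2 := by
    refine Finset.sum_congr rfl fun x _ => ?_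
    rw [← Finset.mul_sum, kernel_sum_one, mul_one]
  have p3 : (∑ x : Fin n → Bool, ∑ y : Fin n → Bool,
        F y^2 * ((1/2:ℝ)^n * noiseK δ (1/2) x y))
      = ∑ y : Fin n → Bool, mu (1/2) y * F y^2 := by
    rw [Finset.sum_comm]
    refine Finset.sum_congr rfl fun y _ => ?_
    simp only [← Finset.mul_sum]
    rw [kernel_sum_one', mu_half]
    ring
  rw [split, p1, p3, ← fourier_noise, ← parseval]
  have expand : ∑ S : Finset (Fin n), (1 - δ^S.card) * (coeff (1/2) F S)^2
      = (∑ S : Finset (Fin n), (coeff (1/2) F S)^2)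
        - ∑ S : Finset (Fin n), δ^S.card * (coeff (1/2) F S)^2 := by
    rw [← Finset.sum_sub_distrib]
    exact Finset.sum_congr rfl fun S _ => by ring
  rw [expand]
  ring

/-- Low-degree concentration of PTFs: for every `k`, constant `C > 0` and `γ > 0` there is
`d = d(k,γ)` (uniform over `n` and `f`) such that every `f ∈ PTF_k` satisfying the noise
sensitivity bound `NS_{δ,1/2}[f] ≤ C·((1−δ)/2)^{1/(4k+6)}` for all `δ ∈ [0,1]` has
`‖f^{>d}‖² ≤ γ` over the uniform distribution. -/
theorem ptf_low_degree_concentration (k : ℕ) (C : ℝ) (hC : 0 < C) (γ : ℝ) (hγ : 0 < γ) :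
    ∃ d : ℕ, ∀ (n : ℕ) (f : (Fin n → Bool) → Bool), IsPTF k f →
      (∀ δ : ℝ, δ ∈ Set.Icc (0:ℝ) 1 →
        NS δ (1/2) (fun x => if f x then (1:ℝ) else 0) ≤
          C * Real.rpow ((1 - δ) / 2) (1 / (4 * (k:ℝ) + 6))) →
      (∑ S ∈ Finset.univ.filter (fun S : Finset (Fin n) => d < S.card),
          (coeff (1/2) (fun x => if f x then (1:ℝ) else 0) S)^2) ≤ γ := by
  set m : ℝ := 4 * (k:ℝ) + 6 with hm
  have hm0 : 0 < m := by positivity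
  set ε : ℝ := min 1 (2 * (γ / (2*C)) ^ m) with hε
  have hε0 : 0 < ε := lt_min one_pos (by positivity)
  have hε1 : ε ≤ 1 := min_le_left _ _
  set δ : ℝ := 1 - ε with hδ
  have hδ0 : 0 ≤ δ := by simp only [hδ]; linarith
  have hδ1 : δ < 1 := by simp only [hδ]; linarith
  obtain ⟨d, hd⟩ := exists_pow_lt_of_lt_one (show (0:ℝ) < 1/2 by norm_num) hδ1
  refine ⟨d, fun n f _ hNS => ?_⟩
  set F : (Fin n → Bool) → ℝ := fun x => if f x then (1:ℝ) else 0 with hF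
  have hNSδ := hNS δ ⟨hδ0, by linarith⟩
  -- bound the RHS
  have hRHS : C * Real.rpow ((1 - δ) / 2) (1 / m) ≤ γ / 2 := by
    have h1 : (1 - δ) / 2 = ε / 2 := by rw [hδ]; ring
    have h2 : ε / 2 ≤ (γ / (2*C)) ^ m := by
      have := min_le_right (1:ℝ) (2 * (γ / (2*C)) ^ m)
      linarith [this]
    have h3 : Real.rpow (ε/2) (1/m) ≤ Real.rpow ((γ / (2*C)) ^ m) (1/m) :=
      Real.rpow_le_rpow (by positivity) h2 (by positivity)
    have h4 : Real.rpow ((γ / (2*C)) ^ m) (1/m) = γ / (2*C) := by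
      rw [show Real.rpow ((γ / (2*C)) ^ m) (1/m) = ((γ / (2*C)) ^ m) ^ (1/m) from rfl,
        ← Real.rpow_mul (by positivity : (0:ℝ) ≤ γ / (2*C)), mul_one_div,
        div_self hm0.ne', Real.rpow_one]
    rw [h1]
    calc C * Real.rpow (ε/2) (1/m) ≤ C * (γ / (2*C)) := by
          rw [← h4]; exact mul_le_mul_of_nonneg_left h3 hC.le
      _ = γ / 2 := by field_simp
  -- Fourier side
  have hterm : ∀ S : Finset (Fin n), d < S.card →
      (coeff (1/2) F S)^2 ≤ 2 * ((1 - δ^S.card) * (coeff (1/2) F S)^2) := by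
    intro S hS
    have h5 : δ^S.card ≤ δ^d := pow_le_pow_of_le_one hδ0 hδ1.le hS.le
    have h6 : δ^S.card < 1/2 := lt_of_le_of_lt h5 hd
    nlinarith [sq_nonneg (coeff (1/2) F S)]
  have hnn : ∀ S : Finset (Fin n), 0 ≤ (1 - δ^S.card) * (coeff (1/2) F S)^2 := by
    intro S
    have : δ^S.card ≤ 1 := pow_le_one₀ hδ0 hδ1.le
    have := sq_nonneg (coeff (1/2) F S)
    nlinarith
  calc (∑ S ∈ Finset.univ.filter (fun S : Finset (Fin n) => d < S.card), (coeff (1/2) F S)^2)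
      ≤ ∑ S ∈ Finset.univ.filter (fun S : Finset (Fin n) => d < S.card),
          2 * ((1 - δ^S.card) * (coeff (1/2) F S)^2) := by
        refine Finset.sum_le_sum fun S hS => ?_
        exact hterm S (Finset.mem_filter.mp hS).2
    _ = 2 * ∑ S ∈ Finset.univ.filter (fun S : Finset (Fin n) => d < S.card),
          (1 - δ^S.card) * (coeff (1/2) F S)^2 := by rw [Finset.mul_sum]
    _ ≤ 2 * ∑ S : Finset (Fin n), (1 - δ^S.card) * (coeff (1/2) F S)^2 := by
        refine mul_le_mul_of_nonneg_left ?_ (by norm_num)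
        exact Finset.sum_le_sum_of_subset_of_nonneg (Finset.filter_subset _ _)
          (fun S _ _ => hnn S)
    _ = NS δ (1/2) F := (NS_eq δ f).symm
    _ ≤ C * Real.rpow ((1 - δ) / 2) (1 / m) := hNSδ
    _ ≤ γ / 2 := hRHS
    _ ≤ γ := by linarith
end
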